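/- Let d ≥ 1 be an integer and α > d, λ > 0, τ > 1 reals with γ := α(τ−1)/d > 1. Let ℓ : ℝ → ℝ be measurable, positive and locally bounded on [1,∞), and slowly varying at infinity. Let W be a random variable with W ≥ 1 almost surely and P(W > t) = ℓ(t)·t^{−(τ−1)} for all t ≥ 1. Then there exist constants M > 0 and u₀ ≥ 1 such that for all reals w ≥ 1 and u ≥ u₀: ∑_{y ∈ ℤ^d, y ≠ 0} E[ 1{W ≥ u}·(1 − exp(−λ·w·W·‖y‖^{−α})) ] ≤ M·w^{d/α}·ℓ(u)·u^{−(γ−1)d/α}. -/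

import Mathlib

open MeasureTheory

/-- The Euclidean norm of a point of the integer lattice `ℤ^d`. -/
noncomputable def euclNorm {d : ℕ} (y : Fin d → ℤ) : ℝ :=
  Real.sqrt (∑ i, ((y i : ℝ)) ^ 2)

/-- A function `ℓ : ℝ → ℝ` is slowly varying at infinity:
for every `c > 0`, `ℓ(ct)/ℓ(t) → 1` as `t → ∞`. -/
def SlowlyVarying (l : ℝ → ℝ) : Prop :=
  ∀ c : ℝ, 0 < c → Filter.Tendsto (fun t => l (c * t) / l t) Filter.atTop (nhds 1)

/-!
Since `1 - e^{-x} ≤ min 1 x`, after exchanging sum and expectation the left side is at most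
`E[1{W ≥ u} Σ_{y ≠ 0} min(1, λ w W ‖y‖^{-α})]`. Cutting the lattice at the radius
`R = A^{1/α}` and counting the points of the dyadic shells beyond it gives
`Σ_{y ≠ 0} min(1, A ‖y‖^{-α}) ≤ C A^{d/α}` for `A ≥ 1`, as `α > d`. What remains is the truncated
moment `E[W^{d/α}; W ≥ u]`: splitting `W` into dyadic ranges above `u`, the Potter-type bound
`ℓ(2^n t) ≤ K^n ℓ(t)` makes the contributions decay geometrically because `d/α < τ - 1`,
so the moment is `O(ℓ(u) u^{d/α - (τ - 1)})`.
-/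

open Filter ENNReal

lemma ofReal_rpow_neg_le_tsum_dyadic {α R r : ℝ} (hα : 0 ≤ α) (hR : 0 < R) (hr : R < r) :
    ENNReal.ofReal (r ^ (-α))
      ≤ ∑' k : ℕ, if r ≤ 2 ^ (k + 1) * R then ENNReal.ofReal ((2 ^ k * R) ^ (-α)) else 0 := by
  obtain ⟨k, hk, hk'⟩ := exists_nat_pow_near (x := r / R) (y := 2) ((one_le_div hR).2 hr.le)
    one_lt_two
  rw [le_div_iff₀ hR] at hk
  rw [div_lt_iff₀ hR] at hk'
  refine le_trans ?_ (ENNReal.le_tsum k)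
  rw [if_pos hk'.le]
  exact ENNReal.ofReal_le_ofReal (Real.rpow_le_rpow_of_nonpos (by positivity) hk (by linarith))

section Lattice

variable {d : ℕ}

lemma abs_le_euclNorm (y : Fin d → ℤ) (i : Fin d) : |(y i : ℝ)| ≤ euclNorm y := by
  rw [← Real.sqrt_sq_eq_abs]
  exact Real.sqrt_le_sqrt
    (Finset.single_le_sum (f := fun j => ((y j : ℝ)) ^ 2) (fun _ _ => sq_nonneg _)
      (Finset.mem_univ i))

lemma tsum_ite_euclNorm_le_le {R : ℝ} (hR : 0 ≤ R) (c : ℝ≥0∞) :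
    ∑' y : Fin d → ℤ, (if euclNorm y ≤ R then c else 0) ≤ ENNReal.ofReal ((2 * R + 1) ^ d) * c := by
  set m : ℕ := ⌊R⌋₊
  have hbox : ∀ y : Fin d → ℤ, euclNorm y ≤ R →
      y ∈ Finset.Icc (fun _ => -(m : ℤ)) (fun _ => (m : ℤ)) := by
    intro y hy
    simp only [Finset.mem_Icc, Pi.le_def, ← forall_and, ← abs_le]
    intro i
    have : |(y i : ℝ)| ≤ R := (abs_le_euclNorm y i).trans hy
    rw [← Int.cast_abs] at this
    rw [Int.natCast_floor_eq_floor hR]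
    exact Int.le_floor.2 this
  calc ∑' y : Fin d → ℤ, (if euclNorm y ≤ R then c else 0)
      = ∑ y ∈ Finset.Icc (fun _ => -(m : ℤ)) (fun _ => (m : ℤ)),
          (if euclNorm y ≤ R then c else 0) :=
        tsum_eq_sum fun y hy => if_neg fun h => hy (hbox y h)
    _ ≤ ∑ _y ∈ Finset.Icc (fun _ => -(m : ℤ)) (fun _ => (m : ℤ)), c :=
        Finset.sum_le_sum fun _ _ => by split_ifs <;> simp
    _ = ((2 * m + 1) ^ d : ℕ) * c := by
        rw [Finset.sum_const, nsmul_eq_mul, Pi.card_Icc]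
        simp only [Int.card_Icc, Finset.prod_const, Finset.card_univ, Fintype.card_fin]
        norm_cast
        congr
        omega
    _ ≤ ENNReal.ofReal ((2 * R + 1) ^ d) * c := by
        gcongr
        rw [← ENNReal.ofReal_natCast]
        gcongr
        push_cast
        gcongr
        exact Nat.floor_le hR

lemma tsum_ite_lt_euclNorm_rpow_le {α R : ℝ} (hα : (d : ℝ) < α) (hR : 1 ≤ R) :
    ∑' y : Fin d → ℤ, (if R < euclNorm y then ENNReal.ofReal (euclNorm y ^ (-α)) else 0)
      ≤ ENNReal.ofReal (5 ^ d / (1 - 2 ^ ((d : ℝ) - α)) * R ^ ((d : ℝ) - α)) := by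
  set ρ : ℝ := 2 ^ ((d : ℝ) - α)
  have hρ0 : 0 ≤ ρ := by positivity
  have hρ1 : ρ < 1 := Real.rpow_lt_one_of_one_lt_of_neg one_lt_two (by linarith)
  have hR0 : 0 < R := by linarith
  have hα0 : 0 < α := d.cast_nonneg.trans_lt hα
  have hterm : ∀ k : ℕ, ENNReal.ofReal ((2 * (2 ^ (k + 1) * R) + 1) ^ d)
      * ENNReal.ofReal ((2 ^ k * R) ^ (-α))
        ≤ ENNReal.ofReal (5 ^ d * R ^ ((d : ℝ) - α) * ρ ^ k) := by
    intro k
    set s : ℝ := 2 ^ k * R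
    have hs : 1 ≤ s := one_le_mul_of_one_le_of_one_le (one_le_pow₀ one_le_two) hR
    rw [← ENNReal.ofReal_mul (by positivity)]
    apply ENNReal.ofReal_le_ofReal
    calc (2 * (2 ^ (k + 1) * R) + 1) ^ d * s ^ (-α)
        ≤ (5 * s) ^ d * s ^ (-α) := by
          gcongr
          rw [pow_succ]
          linarith
      _ = 5 ^ d * s ^ ((d : ℝ) - α) := by
          rw [mul_pow, ← Real.rpow_natCast s, mul_assoc, ← Real.rpow_add (by positivity),
            sub_eq_add_neg]
      _ = 5 ^ d * R ^ ((d : ℝ) - α) * ρ ^ k := by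
          rw [Real.mul_rpow (by positivity) hR0.le, ← Real.rpow_pow_comm zero_le_two]
          ring
  calc ∑' y : Fin d → ℤ, (if R < euclNorm y then ENNReal.ofReal (euclNorm y ^ (-α)) else 0)
      ≤ ∑' y : Fin d → ℤ, ∑' k : ℕ, if euclNorm y ≤ 2 ^ (k + 1) * R
            then ENNReal.ofReal ((2 ^ k * R) ^ (-α)) else 0 := ENNReal.tsum_le_tsum fun y => by
        split_ifs with hy
        · exact ofReal_rpow_neg_le_tsum_dyadic hα0.le hR0 hy
        · exact zero_le
    _ = ∑' k : ℕ, ∑' y : Fin d → ℤ, if euclNorm y ≤ 2 ^ (k + 1) * R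
            then ENNReal.ofReal ((2 ^ k * R) ^ (-α)) else 0 := ENNReal.tsum_comm
    _ ≤ ∑' k : ℕ, ENNReal.ofReal ((2 * (2 ^ (k + 1) * R) + 1) ^ d)
          * ENNReal.ofReal ((2 ^ k * R) ^ (-α)) :=
        ENNReal.tsum_le_tsum fun k => tsum_ite_euclNorm_le_le (by positivity) _
    _ ≤ ∑' k : ℕ, ENNReal.ofReal (5 ^ d * R ^ ((d : ℝ) - α) * ρ ^ k) := ENNReal.tsum_le_tsum hterm
    _ = ENNReal.ofReal (5 ^ d / (1 - ρ) * R ^ ((d : ℝ) - α)) := by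
        rw [← ENNReal.ofReal_tsum_of_nonneg (fun k => by positivity)
          ((summable_geometric_of_lt_one hρ0 hρ1).mul_left _), tsum_mul_left,
          tsum_geometric_of_lt_one hρ0 hρ1]
        ring_nf

lemma tsum_min_one_mul_euclNorm_rpow_le {α : ℝ} (hα : (d : ℝ) < α) :
    ∃ C > 0, ∀ A : ℝ, 1 ≤ A →
      ∑' y : {y : Fin d → ℤ // y ≠ 0}, ENNReal.ofReal (min 1 (A * euclNorm y.1 ^ (-α)))
        ≤ ENNReal.ofReal (C * A ^ ((d : ℝ) / α)) := by
  have hα0 : 0 < α := d.cast_nonneg.trans_lt hα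
  have hρ1 : (2 : ℝ) ^ ((d : ℝ) - α) < 1 :=
    Real.rpow_lt_one_of_one_lt_of_neg one_lt_two (by linarith)
  have hρ : 0 < 1 - (2 : ℝ) ^ ((d : ℝ) - α) := by linarith
  refine ⟨3 ^ d + 5 ^ d / (1 - 2 ^ ((d : ℝ) - α)), by positivity, fun A hA => ?_⟩
  -- split the lattice at the radius `R` where `A * R ^ (-α) = 1`
  set R : ℝ := A ^ α⁻¹
  have hR : 1 ≤ R := Real.one_le_rpow hA (by positivity)
  have hAR : A = R ^ α := (Real.rpow_inv_rpow (by linarith) hα0.ne').symm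
  have hsplit : ∀ y : Fin d → ℤ, ENNReal.ofReal (min 1 (A * euclNorm y ^ (-α)))
      ≤ (if euclNorm y ≤ R then 1 else 0)
        + ENNReal.ofReal A
          * (if R < euclNorm y then ENNReal.ofReal (euclNorm y ^ (-α)) else 0) := by
    intro y
    by_cases hle : euclNorm y ≤ R
    · rw [if_pos hle]
      exact (ENNReal.ofReal_le_one.2 (min_le_left _ _)).trans le_self_add
    · rw [if_neg hle, if_pos (not_le.1 hle), zero_add, ← ENNReal.ofReal_mul (by linarith)]
      exact ENNReal.ofReal_le_ofReal (min_le_right _ _)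
  calc ∑' y : {y : Fin d → ℤ // y ≠ 0}, ENNReal.ofReal (min 1 (A * euclNorm y.1 ^ (-α)))
      ≤ ∑' y : Fin d → ℤ, ENNReal.ofReal (min 1 (A * euclNorm y ^ (-α))) :=
        ENNReal.tsum_comp_le_tsum_of_injective Subtype.val_injective _
    _ ≤ ∑' y : Fin d → ℤ, ((if euclNorm y ≤ R then 1 else 0)
        + ENNReal.ofReal A * (if R < euclNorm y then ENNReal.ofReal (euclNorm y ^ (-α)) else 0)) :=
        ENNReal.tsum_le_tsum hsplit
    _ ≤ ENNReal.ofReal ((2 * R + 1) ^ d) * 1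
          + ENNReal.ofReal A
            * ENNReal.ofReal (5 ^ d / (1 - 2 ^ ((d : ℝ) - α)) * R ^ ((d : ℝ) - α)) := by
        rw [ENNReal.tsum_add, ENNReal.tsum_mul_left]
        gcongr
        · exact tsum_ite_euclNorm_le_le (by linarith) 1
        · exact tsum_ite_lt_euclNorm_rpow_le hα hR
    _ ≤ ENNReal.ofReal ((3 ^ d + 5 ^ d / (1 - 2 ^ ((d : ℝ) - α))) * A ^ ((d : ℝ) / α)) := by
        rw [mul_one, ← ENNReal.ofReal_mul (by linarith), ← ENNReal.ofReal_add (by positivity)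
          (by positivity)]
        apply ENNReal.ofReal_le_ofReal
        have hRd : A ^ ((d : ℝ) / α) = R ^ d := by
          rw [← Real.rpow_natCast, div_eq_mul_inv, mul_comm, Real.rpow_mul (by linarith)]
        have hAR' : A * R ^ ((d : ℝ) - α) = R ^ d := by
          rw [hAR, ← Real.rpow_add (by linarith), add_sub_cancel, Real.rpow_natCast]
        have h3R : (2 * R + 1) ^ d ≤ 3 ^ d * R ^ d := by
          rw [← mul_pow]
          gcongr
          linarith
        rw [hRd, ← mul_assoc, mul_comm A, mul_assoc, hAR']
        nlinarith

end Lattice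

namespace SlowlyVarying

variable {l : ℝ → ℝ}

lemma eventually_le_mul (hl : SlowlyVarying l) (hpos : ∀ᶠ t in atTop, 0 < l t) {c K : ℝ}
    (hc : 0 < c) (hK : 1 < K) : ∀ᶠ t in atTop, l (c * t) ≤ K * l t := by
  filter_upwards [(hl c hc).eventually_lt_const hK, hpos] with t hlt hpos
  exact ((div_lt_iff₀ hpos).1 hlt).le

lemma eventually_forall_pow_mul_le (hl : SlowlyVarying l) (hpos : ∀ᶠ t in atTop, 0 < l t)
    {c K : ℝ} (hc : 1 ≤ c) (hK : 1 < K) : ∀ᶠ t in atTop, ∀ n : ℕ, l (c ^ n * t) ≤ K ^ n * l t := by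
  obtain ⟨T, hT⟩ := eventually_atTop.1 (hl.eventually_le_mul hpos (c := c) (by linarith) hK)
  filter_upwards [eventually_ge_atTop (max T 0)] with t ht n
  induction n with
  | zero => simp
  | succ n ih =>
    have hTn : T ≤ c ^ n * t := (le_max_left _ _).trans <| ht.trans <|
      le_mul_of_one_le_left ((le_max_right _ _).trans ht) (one_le_pow₀ hc)
    calc l (c ^ (n + 1) * t) = l (c * (c ^ n * t)) := by ring_nf
      _ ≤ K * l (c ^ n * t) := hT _ hTn
      _ ≤ K * (K ^ n * l t) := by gcongr
      _ = K ^ (n + 1) * l t := by ring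

end SlowlyVarying

section Moments

variable {Ω : Type*} [MeasurableSpace Ω] {μ : Measure Ω} {W : Ω → ℝ}

lemma lintegral_indicator_rpow_le_tsum (hW : Measurable W) {β v : ℝ} (hβ : 0 ≤ β) (hv : 0 < v) :
    ∫⁻ ω, {ω | 2 * v ≤ W ω}.indicator (fun ω => ENNReal.ofReal (W ω ^ β)) ω ∂μ
      ≤ ∑' n : ℕ, ENNReal.ofReal ((4 * (2 ^ n * v)) ^ β) * μ {ω | 2 ^ n * v < W ω} := by
  have hmeas : ∀ n : ℕ, MeasurableSet {ω | 2 ^ n * v < W ω} :=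
    fun n => measurableSet_lt measurable_const hW
  calc ∫⁻ ω, {ω | 2 * v ≤ W ω}.indicator (fun ω => ENNReal.ofReal (W ω ^ β)) ω ∂μ
      ≤ ∫⁻ ω, ∑' n : ℕ, {ω | 2 ^ n * v < W ω}.indicator
          (fun _ => ENNReal.ofReal ((4 * (2 ^ n * v)) ^ β)) ω ∂μ := by
        refine lintegral_mono fun ω => ?_
        by_cases h : 2 * v ≤ W ω
        · obtain ⟨n, hn, hn'⟩ := exists_nat_pow_near (x := W ω / (2 * v)) (y := 2)
            ((one_le_div (by positivity)).2 h) one_lt_two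
          rw [le_div_iff₀ (by positivity)] at hn
          rw [div_lt_iff₀ (by positivity), pow_succ] at hn'
          rw [Set.indicator_of_mem (show ω ∈ {ω | 2 * v ≤ W ω} from h)]
          refine le_trans ?_ (ENNReal.le_tsum n)
          rw [Set.indicator_of_mem (s := {ω | 2 ^ n * v < W ω})
            (by show 2 ^ n * v < W ω; nlinarith [mul_pos (pow_pos two_pos n : (0:ℝ) < 2 ^ n) hv])]
          exact ENNReal.ofReal_le_ofReal
            (Real.rpow_le_rpow (by linarith) (by linarith) hβ)
        · rw [Set.indicator_of_notMem (show ω ∉ {ω | 2 * v ≤ W ω} from h)]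
          exact zero_le
    _ = ∑' n : ℕ, ENNReal.ofReal ((4 * (2 ^ n * v)) ^ β) * μ {ω | 2 ^ n * v < W ω} := by
        rw [lintegral_tsum fun n => (measurable_const.indicator (hmeas n)).aemeasurable]
        simp_rw [lintegral_indicator_const (hmeas _)]

lemma lintegral_indicator_rpow_le_of_pow_mul_le (hW : Measurable W) {l : ℝ → ℝ} {β κ K v : ℝ}
    (hβ : 0 ≤ β) (hK : 0 ≤ K) (hq : 2 ^ (β - κ) * K < 1) (hv : 1 ≤ v) (hlv : 0 ≤ l v)
    (hgrowth : ∀ n : ℕ, l (2 ^ n * v) ≤ K ^ n * l v)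
    (htail : ∀ t, 1 ≤ t → μ {ω | t < W ω} ≤ ENNReal.ofReal (l t * t ^ (-κ))) :
    ∫⁻ ω, {ω | 2 * v ≤ W ω}.indicator (fun ω => ENNReal.ofReal (W ω ^ β)) ω ∂μ
      ≤ ENNReal.ofReal (4 ^ β * l v * v ^ (β - κ) * (1 - 2 ^ (β - κ) * K)⁻¹) := by
  set q : ℝ := 2 ^ (β - κ) * K
  have hq0 : 0 ≤ q := by positivity
  have hterm : ∀ n : ℕ, ENNReal.ofReal ((4 * (2 ^ n * v)) ^ β) * μ {ω | 2 ^ n * v < W ω}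
      ≤ ENNReal.ofReal (4 ^ β * l v * v ^ (β - κ) * q ^ n) := by
    intro n
    have hs : 1 ≤ 2 ^ n * v := one_le_mul_of_one_le_of_one_le (one_le_pow₀ one_le_two) hv
    grw [htail _ hs]
    rw [← ENNReal.ofReal_mul (by positivity)]
    apply ENNReal.ofReal_le_ofReal
    have hpow : (2 ^ n * v) ^ β * (2 ^ n * v) ^ (-κ) = (2 ^ (β - κ)) ^ n * v ^ (β - κ) := by
      rw [← Real.rpow_add (by positivity), ← sub_eq_add_neg,
        Real.mul_rpow (by positivity) (by positivity), Real.rpow_pow_comm zero_le_two]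
    calc (4 * (2 ^ n * v)) ^ β * (l (2 ^ n * v) * (2 ^ n * v) ^ (-κ))
        = 4 ^ β * l (2 ^ n * v) * ((2 ^ (β - κ)) ^ n * v ^ (β - κ)) := by
          rw [Real.mul_rpow (by norm_num) (by positivity), ← hpow]
          ring
      _ ≤ 4 ^ β * (K ^ n * l v) * ((2 ^ (β - κ)) ^ n * v ^ (β - κ)) := by
          gcongr
          exact hgrowth n
      _ = 4 ^ β * l v * v ^ (β - κ) * q ^ n := by
          rw [mul_pow]
          ring
  calc ∫⁻ ω, {ω | 2 * v ≤ W ω}.indicator (fun ω => ENNReal.ofReal (W ω ^ β)) ω ∂μ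
      ≤ ∑' n : ℕ, ENNReal.ofReal ((4 * (2 ^ n * v)) ^ β) * μ {ω | 2 ^ n * v < W ω} :=
        lintegral_indicator_rpow_le_tsum hW hβ (by linarith)
    _ ≤ ∑' n : ℕ, ENNReal.ofReal (4 ^ β * l v * v ^ (β - κ) * q ^ n) :=
        ENNReal.tsum_le_tsum hterm
    _ = ENNReal.ofReal (4 ^ β * l v * v ^ (β - κ) * (1 - q)⁻¹) := by
        rw [← ENNReal.ofReal_tsum_of_nonneg (fun n => by positivity)
          ((summable_geometric_of_lt_one hq0 hq).mul_left _), tsum_mul_left,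
          tsum_geometric_of_lt_one hq0 hq]

lemma lintegral_indicator_rpow_le_of_tail {l : ℝ → ℝ} (hl : SlowlyVarying l)
    (hpos : ∀ t, 1 ≤ t → 0 < l t) {β κ : ℝ} (hβ : 0 ≤ β) (hβκ : β < κ) (hW : Measurable W)
    (htail : ∀ t, 1 ≤ t → μ {ω | t < W ω} ≤ ENNReal.ofReal (l t * t ^ (-κ))) :
    ∃ C > 0, ∃ u₀ : ℝ, ∀ u, u₀ ≤ u →
      ∫⁻ ω, {ω | u ≤ W ω}.indicator (fun ω => ENNReal.ofReal (W ω ^ β)) ω ∂μ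
        ≤ ENNReal.ofReal (C * l u * u ^ (β - κ)) := by
  have hpos' : ∀ᶠ t in atTop, 0 < l t := eventually_atTop.2 ⟨1, hpos⟩
  -- a growth factor `K` per doubling that the decay `2 ^ (β - κ)` of the tail still beats
  set K : ℝ := 2 ^ ((κ - β) / 2)
  have hK : 1 < K := Real.one_lt_rpow one_lt_two (by linarith)
  have hKq : (2 : ℝ) ^ (β - κ) * K = 2 ^ ((β - κ) / 2) := by
    rw [← Real.rpow_add two_pos]
    congr 1
    ring
  have hq : (2 : ℝ) ^ (β - κ) * K < 1 :=
    hKq ▸ Real.rpow_lt_one_of_one_lt_of_neg one_lt_two (by linarith)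
  have hq' : 0 < 1 - 2 ^ (β - κ) * K := sub_pos.2 hq
  obtain ⟨T₁, hT₁⟩ := eventually_atTop.1 (hl.eventually_forall_pow_mul_le hpos' one_le_two hK)
  obtain ⟨T₂, hT₂⟩ := eventually_atTop.1
    (hl.eventually_le_mul hpos' (c := 2⁻¹) (by norm_num) one_lt_two)
  refine ⟨4 ^ β * 2 * 2 ^ (κ - β) / (1 - 2 ^ (β - κ) * K), by positivity,
    max 2 (max (2 * T₁) T₂), fun u hu => ?_⟩
  simp only [max_le_iff] at hu
  obtain ⟨hu2, hu1, hu2'⟩ := hu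
  obtain ⟨v, rfl⟩ : ∃ v, u = 2 * v := ⟨u / 2, by ring⟩
  have hv : 1 ≤ v := by linarith
  have hlv : l v ≤ 2 * l (2 * v) := by
    simpa [← mul_assoc] using hT₂ (2 * v) hu2'
  have hvpow : v ^ (β - κ) = 2 ^ (κ - β) * (2 * v) ^ (β - κ) := by
    rw [Real.mul_rpow zero_le_two (by linarith), ← mul_assoc, ← Real.rpow_add two_pos,
      show κ - β + (β - κ) = 0 by ring, Real.rpow_zero, one_mul]
  refine (lintegral_indicator_rpow_le_of_pow_mul_le hW hβ (by positivity) hq hv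
    (hpos v hv).le (hT₁ v (by linarith)) htail).trans (ENNReal.ofReal_le_ofReal ?_)
  calc 4 ^ β * l v * v ^ (β - κ) * (1 - 2 ^ (β - κ) * K)⁻¹
      = 4 ^ β * 2 ^ (κ - β) * (2 * v) ^ (β - κ) / (1 - 2 ^ (β - κ) * K) * l v := by
        rw [hvpow]
        ring
    _ ≤ 4 ^ β * 2 ^ (κ - β) * (2 * v) ^ (β - κ) / (1 - 2 ^ (β - κ) * K) * (2 * l (2 * v)) := by
        gcongr
    _ = 4 ^ β * 2 * 2 ^ (κ - β) / (1 - 2 ^ (β - κ) * K) * l (2 * v) * (2 * v) ^ (β - κ) := by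
        ring

lemma one_sub_exp_neg_le_min (x : ℝ) : 1 - Real.exp (-x) ≤ min 1 x :=
  le_min (by linarith [Real.exp_pos (-x)]) (by linarith [Real.add_one_le_exp (-x)])

lemma exists_tsum_lintegral_one_sub_exp_neg_le {d : ℕ} {α : ℝ} (hα : (d : ℝ) < α)
    (hW : Measurable W) :
    ∃ C > 0, ∀ a u : ℝ, 0 ≤ a → 1 ≤ a * u →
      ∑' y : {y : Fin d → ℤ // y ≠ 0}, ∫⁻ ω, ENNReal.ofReal
          (if u ≤ W ω then 1 - Real.exp (-(a * W ω * euclNorm y.1 ^ (-α))) else 0) ∂μ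
        ≤ ENNReal.ofReal (C * a ^ ((d : ℝ) / α))
          * ∫⁻ ω, {ω | u ≤ W ω}.indicator (fun ω => ENNReal.ofReal (W ω ^ ((d : ℝ) / α))) ω ∂μ := by
  obtain ⟨C, hC, hlattice⟩ := tsum_min_one_mul_euclNorm_rpow_le hα
  refine ⟨C, hC, fun a u ha hau => ?_⟩
  have hu : 0 < u := pos_of_mul_pos_right (one_pos.trans_le hau) ha
  have hpt : ∀ ω, ∑' y : {y : Fin d → ℤ // y ≠ 0}, ENNReal.ofReal
        (if u ≤ W ω then 1 - Real.exp (-(a * W ω * euclNorm y.1 ^ (-α))) else 0)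
      ≤ ENNReal.ofReal (C * a ^ ((d : ℝ) / α))
        * {ω | u ≤ W ω}.indicator (fun ω => ENNReal.ofReal (W ω ^ ((d : ℝ) / α))) ω := by
    intro ω
    by_cases h : u ≤ W ω
    · rw [Set.indicator_of_mem (s := {ω | u ≤ W ω}) h, ← ENNReal.ofReal_mul (by positivity),
        mul_assoc C, ← Real.mul_rpow ha (by linarith)]
      calc ∑' y : {y : Fin d → ℤ // y ≠ 0}, ENNReal.ofReal
            (if u ≤ W ω then 1 - Real.exp (-(a * W ω * euclNorm y.1 ^ (-α))) else 0)
          ≤ ∑' y : {y : Fin d → ℤ // y ≠ 0},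
              ENNReal.ofReal (min 1 (a * W ω * euclNorm y.1 ^ (-α))) :=
            ENNReal.tsum_le_tsum fun y => by
              rw [if_pos h]
              exact ENNReal.ofReal_le_ofReal (one_sub_exp_neg_le_min _)
        _ ≤ _ := hlattice _ (hau.trans (by gcongr))
    · simp [h]
  calc ∑' y : {y : Fin d → ℤ // y ≠ 0}, ∫⁻ ω, ENNReal.ofReal
          (if u ≤ W ω then 1 - Real.exp (-(a * W ω * euclNorm y.1 ^ (-α))) else 0) ∂μ
      = ∫⁻ ω, ∑' y : {y : Fin d → ℤ // y ≠ 0}, ENNReal.ofReal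
          (if u ≤ W ω then 1 - Real.exp (-(a * W ω * euclNorm y.1 ^ (-α))) else 0) ∂μ :=
        (lintegral_tsum fun y => (Measurable.ite (measurableSet_le measurable_const hW)
          (by fun_prop) measurable_const).ennreal_ofReal.aemeasurable).symm
    _ ≤ _ := (lintegral_mono hpt).trans_eq (lintegral_const_mul' _ _ ENNReal.ofReal_ne_top)

end Moments

theorem stmt5_general (d : ℕ) (α lam τ : ℝ)
    (hα : (d : ℝ) < α) (hlam : 0 < lam)
    (hγ : 1 < α * (τ - 1) / d)
    (l : ℝ → ℝ) (hlpos : ∀ t : ℝ, 1 ≤ t → 0 < l t)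
    (hlsv : SlowlyVarying l)
    {Ω : Type*} [MeasurableSpace Ω] (μ : Measure Ω)
    (W : Ω → ℝ) (hW : Measurable W)
    (htail : ∀ t : ℝ, 1 ≤ t → μ {ω | t < W ω} = ENNReal.ofReal (l t * t ^ (-(τ - 1)))) :
    ∃ M > (0 : ℝ), ∃ u₀ : ℝ, 1 ≤ u₀ ∧ ∀ w : ℝ, 1 ≤ w → ∀ u : ℝ, u₀ ≤ u →
      (∑' y : {y : Fin d → ℤ // y ≠ 0},
          ∫⁻ ω, ENNReal.ofReal
            (if u ≤ W ω then 1 - Real.exp (-(lam * w * W ω * euclNorm y.1 ^ (-α)))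
             else 0) ∂μ)
        ≤ ENNReal.ofReal
            (M * w ^ ((d : ℝ) / α) * l u *
              u ^ (-((α * (τ - 1) / d - 1) * d / α))) := by
  have hd : (0 : ℝ) < d := d.cast_nonneg.lt_of_ne fun h => by norm_num [← h] at hγ
  have hα0 : 0 < α := hd.trans hα
  have hβκ : (d : ℝ) / α < τ - 1 := by
    rw [div_lt_iff₀ hα0]
    linarith [(one_lt_div hd).1 hγ]
  obtain ⟨Cg, hCg, hsum⟩ := exists_tsum_lintegral_one_sub_exp_neg_le (μ := μ) hα hW
  obtain ⟨Cm, hCm, u₁, hmoment⟩ := lintegral_indicator_rpow_le_of_tail hlsv hlpos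
    (by positivity) hβκ hW fun t ht => (htail t ht).le
  refine ⟨Cg * lam ^ ((d : ℝ) / α) * Cm, by positivity, max 1 (max lam⁻¹ u₁), le_max_left _ _,
    fun w hw u hu => ?_⟩
  simp only [max_le_iff] at hu
  obtain ⟨hu1, hulam, hu₁⟩ := hu
  have hau : 1 ≤ lam * w * u := by
    rw [inv_le_iff_one_le_mul₀ hlam] at hulam
    nlinarith
  have hexp : -((α * (τ - 1) / d - 1) * d / α) = (d : ℝ) / α - (τ - 1) := by
    field_simp
    ring
  calc _ ≤ ENNReal.ofReal (Cg * (lam * w) ^ ((d : ℝ) / α))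
        * ∫⁻ ω, {ω | u ≤ W ω}.indicator (fun ω => ENNReal.ofReal (W ω ^ ((d : ℝ) / α))) ω ∂μ :=
        hsum _ _ (by positivity) hau
    _ ≤ ENNReal.ofReal (Cg * (lam * w) ^ ((d : ℝ) / α))
        * ENNReal.ofReal (Cm * l u * u ^ ((d : ℝ) / α - (τ - 1))) := by
        gcongr
        exact hmoment u hu₁
    _ = _ := by
        rw [← ENNReal.ofReal_mul (by positivity), hexp, Real.mul_rpow hlam.le (by linarith)]
        ring_nf

/-- **(6.5) of Claim 6.2.** With `W ≥ 1` a.s., `P(W > t) = ℓ(t) t^{-(τ-1)}` for `t ≥ 1`,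
and `γ = α(τ-1)/d > 1`, there are `M > 0` and `u₀ ≥ 1` such that for all `w ≥ 1`, `u ≥ u₀`:
`∑_{y ≠ 0} E[1{W ≥ u} (1 - exp(-λ w W ‖y‖^{-α}))] ≤ M w^{d/α} ℓ(u) u^{-(γ-1)d/α}`. -/
theorem stmt5 (d : ℕ) (hd : 1 ≤ d) (α lam τ : ℝ)
    (hα : (d : ℝ) < α) (hlam : 0 < lam) (hτ : 1 < τ)
    (hγ : 1 < α * (τ - 1) / d)
    (l : ℝ → ℝ) (hlmeas : Measurable l) (hlpos : ∀ t : ℝ, 1 ≤ t → 0 < l t)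
    (hlbdd : ∀ T : ℝ, 1 ≤ T → BddAbove (l '' Set.Icc 1 T))
    (hlsv : SlowlyVarying l)
    {Ω : Type*} [MeasurableSpace Ω] (μ : Measure Ω) [IsProbabilityMeasure μ]
    (W : Ω → ℝ) (hW : Measurable W) (hW1 : ∀ᵐ ω ∂μ, 1 ≤ W ω)
    (htail : ∀ t : ℝ, 1 ≤ t → μ {ω | t < W ω} = ENNReal.ofReal (l t * t ^ (-(τ - 1)))) :
    ∃ M > (0 : ℝ), ∃ u₀ : ℝ, 1 ≤ u₀ ∧ ∀ w : ℝ, 1 ≤ w → ∀ u : ℝ, u₀ ≤ u →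
      (∑' y : {y : Fin d → ℤ // y ≠ 0},
          ∫⁻ ω, ENNReal.ofReal
            (if u ≤ W ω then 1 - Real.exp (-(lam * w * W ω * euclNorm y.1 ^ (-α)))
             else 0) ∂μ)
        ≤ ENNReal.ofReal
            (M * w ^ ((d : ℝ) / α) * l u *
              u ^ (-((α * (τ - 1) / d - 1) * d / α))) :=
  stmt5_general d α lam τ hα hlam hγ l hlpos hlsv μ W hW htail
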